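/- Gaussian integral of the probit link: ∫ ψ(x) N(x | μ, σ²) dx = ψ(μ / √(1 + σ²)), where ψ is the CDF of the standard normal distribution and N(x|μ,σ²) is the Gaussian density with mean μ and variance σ². -/

import Mathlib

/-!
`ψ(x) = P(Z ≤ x)` for `Z ~ N(0, 1)`, so for `X ~ N(μ, σ²)` independent of `Z` the integral is
`P(Z ≤ X) = P(Z - X ≤ 0)`. The law of `Z - X` is the convolution
`N(0, 1) ∗ N(-μ, σ²) = N(-μ, 1 + σ²)`, and standardising gives
`P(Z - X ≤ 0) = ψ(μ / √(1 + σ²))`.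
-/

open MeasureTheory Real

/-- Gaussian density with mean `μ` and variance `v`. -/
noncomputable def gpdf (μ v x : ℝ) : ℝ :=
  (Real.sqrt (2 * Real.pi * v))⁻¹ * Real.exp (-(x - μ) ^ 2 / (2 * v))

/-- Standard normal CDF. -/
noncomputable def stdCDF (t : ℝ) : ℝ := ∫ s in Set.Iic t, gpdf 0 1 s

open ProbabilityTheory Set
open scoped NNReal

lemma gpdf_eq_gaussianPDFReal (m : ℝ) (v : ℝ≥0) : gpdf m v = gaussianPDFReal m v := rfl

lemma stdCDF_eq_measureReal (t : ℝ) : stdCDF t = (gaussianReal 0 1).real (Iic t) := by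
  rw [measureReal_def, gaussianReal_apply_eq_integral _ one_ne_zero,
    ENNReal.toReal_ofReal (setIntegral_nonneg measurableSet_Iic fun x _ ↦
      gaussianPDFReal_nonneg _ _ x)]
  rfl

lemma gaussianReal_eq_map_gaussianReal_zero_one (m : ℝ) (v : ℝ≥0) :
    gaussianReal m v = (gaussianReal 0 1).map (fun z ↦ √v * z + m) := by
  rw [show (fun z ↦ √v * z + m) = (· + m) ∘ (√v * ·) from rfl,
    ← Measure.map_map (by fun_prop) (by fun_prop), gaussianReal_map_const_mul,
    gaussianReal_map_add_const]
  congr 1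
  · ring
  · ext; simp

lemma measureReal_gaussianReal_Iic (m : ℝ) {v : ℝ≥0} (hv : v ≠ 0) (c : ℝ) :
    (gaussianReal m v).real (Iic c) = stdCDF ((c - m) / √v) := by
  have hpos : 0 < √(v : ℝ) := Real.sqrt_pos.mpr (pos_iff_ne_zero.mpr hv : 0 < v)
  have hpre : (fun z ↦ √v * z + m) ⁻¹' Iic c = Iic ((c - m) / √v) := by
    ext z
    simp only [mem_preimage, mem_Iic, le_div_iff₀ hpos]
    constructor <;> intro h <;> linarith
  rw [gaussianReal_eq_map_gaussianReal_zero_one,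
    map_measureReal_apply (by fun_prop) measurableSet_Iic, hpre, stdCDF_eq_measureReal]

lemma prod_setOf_fst_le_snd (ν ρ : Measure ℝ) [SFinite ν] [SFinite ρ] :
    ν.prod ρ {p | p.1 ≤ p.2} = ∫⁻ y, ν (Iic y) ∂ρ :=
  Measure.prod_apply_symm (measurableSet_le measurable_fst measurable_snd)

lemma conv_map_neg_eq_map_sub (ν ρ : Measure ℝ) [SFinite ν] [SFinite ρ] :
    ν ∗ ρ.map Neg.neg = (ν.prod ρ).map (fun p ↦ p.1 - p.2) := by
  conv_lhs => rw [Measure.conv, ← Measure.map_id (μ := ν),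
    Measure.map_prod_map _ _ measurable_id measurable_neg,
    Measure.map_map (by fun_prop) (by fun_prop)]
  rfl

lemma conv_map_neg_Iic_zero (ν ρ : Measure ℝ) [SFinite ν] [SFinite ρ] :
    (ν ∗ ρ.map Neg.neg) (Iic 0) = ν.prod ρ {p | p.1 ≤ p.2} := by
  rw [conv_map_neg_eq_map_sub, Measure.map_apply (by fun_prop) measurableSet_Iic]
  simp only [preimage, mem_Iic, sub_nonpos]

lemma integral_measureReal_Iic (ν ρ : Measure ℝ) [IsFiniteMeasure ν] [IsFiniteMeasure ρ] :
    ∫ x, ν.real (Iic x) ∂ρ = (ν ∗ ρ.map Neg.neg).real (Iic 0) := by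
  have hmono : Monotone fun x ↦ ν (Iic x) := fun _ _ h ↦ measure_mono (Iic_subset_Iic.mpr h)
  rw [measureReal_def, conv_map_neg_Iic_zero, prod_setOf_fst_le_snd,
    ← integral_toReal hmono.measurable.aemeasurable (ae_of_all _ fun _ ↦ measure_lt_top _ _)]
  rfl

/-- `∫ ψ(x) N(x|μ,σ²) dx = ψ(μ/√(1+σ²))`. -/
theorem stmt2 (μ σ2 : ℝ) (hσ : 0 < σ2) :
    ∫ x, stdCDF x * gpdf μ σ2 x = stdCDF (μ / Real.sqrt (1 + σ2)) := by
  lift σ2 to ℝ≥0 using hσ.le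
  have hσ0 : σ2 ≠ 0 := by exact_mod_cast hσ.ne'
  calc ∫ x, stdCDF x * gpdf μ σ2 x
      = ∫ x, (gaussianReal 0 1).real (Iic x) ∂gaussianReal μ σ2 := by
        simp_rw [integral_gaussianReal_eq_integral_smul hσ0, stdCDF_eq_measureReal, smul_eq_mul,
          mul_comm, gpdf_eq_gaussianPDFReal]
    _ = (gaussianReal (0 + -μ) (1 + σ2)).real (Iic 0) := by
        rw [integral_measureReal_Iic, gaussianReal_map_neg, gaussianReal_conv_gaussianReal]
    _ = stdCDF (μ / √(1 + σ2)) := by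
        rw [measureReal_gaussianReal_Iic _ (by positivity)]
        simp
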